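/- Let κ > 7/6 be a constant and ρ = ρ(n) ≥ κ·ln n. Then for any fixed integers d_1, d_2 ≥ 1, with high probability a random formula φ from Φ^plant(n, ρn) contains no two d_1-isolated variables at distance at most d_2 from each other in the primal graph G(φ). -/

import Mathlib

open Finset Filter
open scoped Classical Topology

/-- An assignment of Boolean values to `n` variables. -/
abbrev Assignment (n : ℕ) := Fin n → Bool

/-- A 3-clause over `n` variables: three distinct variables (an embedding `Fin 3 ↪ Fin n`)
together with signs for the three literals (`true` = positive literal). -/
abbrev Clause (n : ℕ) := (Fin 3 ↪ Fin n) × (Fin 3 → Bool)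

/-- A 3-CNF formula with `m` clauses over `n` variables: a sequence of `m` clauses
(repetitions allowed). -/
abbrev Formula (n m : ℕ) := Fin m → Clause n

/-- The `i`-th literal of clause `c` is satisfied by assignment `u`. -/
def litSat {n : ℕ} (u : Assignment n) (c : Clause n) (i : Fin 3) : Prop :=
  u (c.1 i) = c.2 i

/-- Clause `c` is satisfied by assignment `u`. -/
def clauseSat {n : ℕ} (u : Assignment n) (c : Clause n) : Prop := ∃ i, litSat u c i

/-- The formula `φ` is satisfied by assignment `u`. -/
def Sat {n m : ℕ} (φ : Formula n m) (u : Assignment n) : Prop := ∀ j, clauseSat u (φ j)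

/-- `φ` belongs to the support of the planted distribution `Φ^plant(n, m)`:
every clause contains at least one positive literal, i.e. the all-ones (planted)
assignment satisfies `φ`.  The planted distribution is uniform on such formulas. -/
def Planted {n m : ℕ} (φ : Formula n m) : Prop := ∀ j, ∃ i, (φ j).2 i = true

/-- The number of clauses of `φ` unsatisfied by `u`. -/
noncomputable def numUnsat {n m : ℕ} (φ : Formula n m) (u : Assignment n) : ℕ :=
  (univ.filter fun j => ¬ clauseSat u (φ j)).card

/-- The number of clauses of `φ` satisfied by `u`. -/
noncomputable def numSat {n m : ℕ} (φ : Formula n m) (u : Assignment n) : ℕ :=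
  (univ.filter fun j => clauseSat u (φ j)).card

/-- Flip the value of variable `i` in assignment `u`. -/
def flipVar {n : ℕ} (u : Assignment n) (i : Fin n) : Assignment n :=
  Function.update u i (!u i)

/-- `u` is a local minimum of `φ`: no single-variable flip strictly decreases the
number of unsatisfied clauses. -/
def LocalMinAssn {n m : ℕ} (φ : Formula n m) (u : Assignment n) : Prop :=
  ∀ i, numUnsat φ u ≤ numUnsat φ (flipVar u i)

/-- `u` is a proper local minimum of `φ`: a local minimum that does not satisfy `φ`. -/
def ProperLocalMin {n m : ℕ} (φ : Formula n m) (u : Assignment n) : Prop :=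
  LocalMinAssn φ u ∧ ¬ Sat φ u

/-- The number of variables assigned `0` by `u`. -/
noncomputable def numZeros {n : ℕ} (u : Assignment n) : ℕ :=
  (univ.filter fun i => u i = false).card

/-- The number of variables assigned `1` by `u`. -/
noncomputable def numOnes {n : ℕ} (u : Assignment n) : ℕ :=
  (univ.filter fun i => u i = true).card

/-- Conditional probability `P(E | F)` for the uniform distribution on a finite type. -/
noncomputable def condProb {α : Type*} [Fintype α] (F E : α → Prop) : ℝ :=
  ((univ.filter fun a => F a ∧ E a).card : ℝ) / ((univ.filter F).card : ℝ)

/-- Probability of the event `E` for a random formula drawn from the (uniform) planted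
distribution `Φ^plant(n, m)`. -/
noncomputable def prPlanted (n m : ℕ) (E : Formula n m → Prop) : ℝ :=
  condProb Planted E

/-- Expectation of `f` over a random formula from the planted distribution
`Φ^plant(n, m)`. -/
noncomputable def avgPlanted (n m : ℕ) (f : Formula n m → ℝ) : ℝ :=
  (∑ φ ∈ univ.filter (Planted (n := n) (m := m)), f φ) /
    ((univ.filter (Planted (n := n) (m := m))).card : ℝ)

/-- The primal graph `G(φ)` of the formula `φ` as a simple graph. -/
def primalGraph {n m : ℕ} (φ : Formula n m) : SimpleGraph (Fin n) :=
  SimpleGraph.fromRel fun x y => ∃ (j : Fin m) (i i' : Fin 3), (φ j).1 i = x ∧ (φ j).1 i' = y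

/-- The clause `c` has type `(+,-,-)`: exactly one positive literal. -/
def typePNN {n : ℕ} (c : Clause n) : Prop :=
  ∃ i, c.2 i = true ∧ ∀ i', i' ≠ i → c.2 i' = false

/-- Variable `x` occurs positively in clause `c`. -/
def posIn {n : ℕ} (c : Clause n) (x : Fin n) : Prop := ∃ i, c.1 i = x ∧ c.2 i = true

/-- The number of clauses of type `(+,-,-)` of `φ` in which `x` occurs positively. -/
noncomputable def isolatedDeg {n m : ℕ} (φ : Formula n m) (x : Fin n) : ℕ :=
  (univ.filter fun j => typePNN (φ j) ∧ posIn (φ j) x).card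

/-- Variable `x` is `k`-isolated in `φ`: it appears positively in at most `k` clauses
of type `(+,-,-)`. -/
def kIsolated {n m : ℕ} (φ : Formula n m) (k : ℕ) (x : Fin n) : Prop := isolatedDeg φ x ≤ k

/-!
If two distinct `d₁`-isolated variables `x ≠ y` lie at distance `ℓ ≤ d₂`, a shortest path
`x = v₀, …, v_ℓ = y` in `G(φ)` is witnessed by `ℓ` pairwise distinct clauses, and at most `2 d₁`
of the other clauses are `(+,-,-)` clauses positive at `x` or `y`. Exactly `6 (n-1)(n-2)` of the
`7 n (n-1)(n-2)` planted clauses are of the latter kind, so each other clause avoids them with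
probability `1 - 6/(7n)`. A union bound over the vertices (`n^(ℓ+1)`), clause positions and clauses
(`O(n)` per edge) of the path, and over the `≤ 2 d₁` exceptional positions, bounds the probability
by `n · poly(m/n) · e^{-6m/(7n)}`, which is `n^{1 - 6κ/7 + o(1)} → 0` for `m/n ≥ κ ln n`, `κ > 7/6`.
-/

lemma card_filter_forall_mem_eq {ι α : Type*} [Fintype ι] [DecidableEq ι] [Fintype α]
    (S : Finset ι) (g : ι → α) [DecidablePred fun f : ι → α => ∀ i ∈ S, f i = g i] :
    #{f : ι → α | ∀ i ∈ S, f i = g i} = Fintype.card α ^ (Fintype.card ι - #S) := by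
  have : ({f : ι → α | ∀ i ∈ S, f i = g i} : Finset (ι → α)) =
      Fintype.piFinset fun i => if i ∈ S then {g i} else univ := by
    ext f
    simp only [mem_filter, mem_univ, true_and, Fintype.mem_piFinset]
    refine forall_congr' fun i => ?_
    split_ifs with hi <;> simp [hi]
  rw [this, Fintype.card_piFinset]
  simp only [apply_ite card, card_singleton, card_univ]
  rw [prod_ite, prod_const_one, prod_const, one_mul, filter_not, card_sdiff,
    filter_mem_eq_inter, univ_inter, card_univ, inter_eq_left.2 (subset_univ S)]

def embeddingSubtypeEquiv {α β : Type*} (p : β → Prop) :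
    {e : α ↪ β // ∀ a, p (e a)} ≃ (α ↪ Subtype p) where
  toFun e := ⟨fun a => ⟨e.1 a, e.2 a⟩, fun _ _ h => e.1.injective (congrArg Subtype.val h)⟩
  invFun e := ⟨e.trans (Function.Embedding.subtype p), fun a => (e a).2⟩
  left_inv _ := rfl
  right_inv _ := rfl

lemma descFactorial_three_eq (n : ℕ) :
    n.descFactorial 3 = (n - 1).descFactorial 3 + 3 * ((n - 1) * (n - 2)) := by
  rcases n with _ | _ | _ | n <;> simp [Nat.descFactorial]
  ring

lemma sq_le_four_mul_pred_mul {n : ℕ} (hn : 4 ≤ n) : n ^ 2 ≤ 4 * ((n - 1) * (n - 2)) := by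
  obtain ⟨k, rfl⟩ := Nat.exists_eq_add_of_le' hn
  simp only [show k + 4 - 1 = k + 3 by omega, show k + 4 - 2 = k + 2 by omega]
  nlinarith

section FewHits

variable {ι κ α : Type*} [Fintype ι] [DecidableEq ι] [Fintype κ] [DecidableEq α]

lemma card_piFinset_extend (j : κ ↪ ι) (C : κ → Finset α) (T : Finset ι) (B P : Finset α)
    (hT : T ⊆ (univ.map j)ᶜ) :
    #(Fintype.piFinset (Function.extend j C fun t => if t ∈ T then B else P \ B)) =
      (∏ i, #(C i)) * (#B ^ #T * #(P \ B) ^ (Fintype.card ι - Fintype.card κ - #T)) := by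
  have hext : ∀ t ∈ (univ.map j)ᶜ,
      #(Function.extend j C (fun t => if t ∈ T then B else P \ B) t) =
        if t ∈ T then #B else #(P \ B) := fun t ht => by
    rw [Function.extend_apply' _ _ _ fun ⟨i, hi⟩ =>
      mem_compl.1 ht (hi ▸ mem_map_of_mem j (mem_univ i)), apply_ite card]
  rw [Fintype.card_piFinset, ← prod_mul_prod_compl (univ.map j), prod_map, prod_congr rfl hext,
    prod_ite, prod_const, prod_const, filter_mem_eq_inter, inter_eq_right.2 hT, filter_not,
    filter_mem_eq_inter, inter_eq_right.2 hT, card_sdiff_of_subset hT, card_compl, card_map,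
    card_univ]
  simp only [j.injective.extend_apply]

lemma card_filter_few_hits_le [Fintype α] (j : κ ↪ ι) (C : κ → Finset α) (B P : Finset α) (k : ℕ)
    [DecidablePred fun f : ι → α => (∀ i, f (j i) ∈ C i) ∧ (∀ t, f t ∈ P) ∧
      #{t | t ∉ Set.range j ∧ f t ∈ B} ≤ k] :
    #{f : ι → α | (∀ i, f (j i) ∈ C i) ∧ (∀ t, f t ∈ P) ∧
        #{t | t ∉ Set.range j ∧ f t ∈ B} ≤ k} ≤
      ∑ a ∈ range (k + 1), Fintype.card ι ^ a *
        ((∏ i, #(C i)) * (#B ^ a * #(P \ B) ^ (Fintype.card ι - Fintype.card κ - a))) := by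
  -- Sort the functions by their set `T` of hits outside the image of `j`: each class lies in a box.
  let box (T : Finset ι) : Finset (ι → α) :=
    Fintype.piFinset (Function.extend j C fun t => if t ∈ T then B else P \ B)
  have hcover : ({f : ι → α | (∀ i, f (j i) ∈ C i) ∧ (∀ t, f t ∈ P) ∧
      #{t | t ∉ Set.range j ∧ f t ∈ B} ≤ k} : Finset (ι → α)) ⊆
        (range (k + 1)).biUnion fun a => (powersetCard a (univ.map j)ᶜ).biUnion box := by
    intro f hf
    obtain ⟨hC, hP, hk⟩ := (mem_filter.1 hf).2
    set T : Finset ι := {t | t ∉ Set.range j ∧ f t ∈ B}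
    have hT : T ⊆ (univ.map j)ᶜ := fun t ht => by simpa using (mem_filter.1 ht).2.1
    simp only [mem_biUnion, mem_range, mem_powersetCard]
    refine ⟨#T, Nat.lt_succ_of_le hk, T, ⟨hT, rfl⟩, Fintype.mem_piFinset.2 fun t => ?_⟩
    by_cases ht : t ∈ Set.range j
    · obtain ⟨i, rfl⟩ := ht
      rw [j.injective.extend_apply]
      exact hC i
    · rw [Function.extend_apply' _ _ _ ht]
      split_ifs with htT
      · exact (mem_filter.1 htT).2.2
      · exact mem_sdiff.2 ⟨hP t, fun hB => htT (mem_filter.2 ⟨mem_univ t, ht, hB⟩)⟩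
  refine (card_le_card hcover).trans <| card_biUnion_le.trans <| sum_le_sum fun a _ => ?_
  refine card_biUnion_le.trans ?_
  rw [sum_congr rfl fun T hT => card_piFinset_extend j C T B P (mem_powersetCard.1 hT).1 |>.trans
    (by rw [(mem_powersetCard.1 hT).2]), sum_const, card_powersetCard, smul_eq_mul]
  gcongr
  exact (Nat.choose_le_pow _ _).trans (Nat.pow_le_pow_left (card_le_univ _) a)

end FewHits

namespace SimpleGraph.Walk

variable {V : Type*} {G : SimpleGraph V} {u v : V}

lemma sub_le_edist_getVert (w : G.Walk u v) (hw : (w.length : ℕ∞) = G.edist u v) {i k : ℕ}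
    (hk : k ≤ w.length) : ((k - i : ℕ) : ℕ∞) ≤ G.edist (w.getVert i) (w.getVert k) := by
  have hu : G.edist u (w.getVert i) ≤ i :=
    (w.take i).edist_le.trans (by simp [take_length])
  have hv : G.edist (w.getVert k) v ≤ (w.length - k : ℕ) :=
    (w.drop k).edist_le.trans (by simp [drop_length])
  have htri : G.edist u v ≤ G.edist u (w.getVert i) + G.edist (w.getVert i) (w.getVert k) +
      G.edist (w.getVert k) v := by
    rw [add_assoc]
    exact G.edist_triangle.trans (by gcongr; exact G.edist_triangle)
  rcases eq_or_ne (G.edist (w.getVert i) (w.getVert k)) ⊤ with htop | htop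
  · simp [htop]
  obtain ⟨e, he⟩ := ENat.ne_top_iff_exists.1 htop
  rw [← he, ← hw] at htri
  rw [← he]
  have := htri.trans (add_le_add (add_le_add_left hu _) hv)
  norm_cast at this ⊢
  omega

end SimpleGraph.Walk

section CondProb

variable {α : Type*} [Fintype α] {F E : α → Prop}

lemma condProb_nonneg : 0 ≤ condProb F E := by
  unfold condProb
  positivity

lemma condProb_mono {E' : α → Prop} (h : ∀ a, F a → E a → E' a) :
    condProb F E ≤ condProb F E' := by
  unfold condProb
  refine div_le_div_of_nonneg_right ?_ (Nat.cast_nonneg _)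
  refine Nat.cast_le.2 (card_le_card fun a ha => ?_)
  simp only [mem_filter, mem_univ, true_and] at ha ⊢
  exact ⟨ha.1, h a ha.1 ha.2⟩

lemma condProb_exists_le_sum {ι : Type*} [DecidableEq α] (s : Finset ι) (E : ι → α → Prop) :
    condProb F (fun a => ∃ i ∈ s, E i a) ≤ ∑ i ∈ s, condProb F (E i) := by
  unfold condProb
  rw [← sum_div]
  gcongr
  have hcover : ({a | F a ∧ ∃ i ∈ s, E i a} : Finset α) ⊆
      s.biUnion fun i => {a | F a ∧ E i a} := fun a ha => by
    obtain ⟨hFa, i, hi, hEa⟩ := (mem_filter.1 ha).2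
    exact mem_biUnion.2 ⟨i, hi, mem_filter.2 ⟨mem_univ a, hFa, hEa⟩⟩
  convert (Nat.cast_le (α := ℝ)).2 ((card_le_card hcover).trans card_biUnion_le) using 1 <;>
    push_cast
  · congr!
  · rfl

lemma condProb_not (hF : ∃ a, F a) : condProb F (fun a => ¬ E a) = 1 - condProb F E := by
  have hpos : (0 : ℝ) < #{a | F a} := by
    obtain ⟨a, ha⟩ := hF
    exact_mod_cast card_pos.2 ⟨a, mem_filter.2 ⟨mem_univ a, ha⟩⟩
  have hsplit := card_filter_add_card_filter_not (s := ({a | F a} : Finset α)) E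
  simp only [filter_filter] at hsplit
  unfold condProb
  dsimp only
  rw [eq_sub_iff_add_eq, ← add_div, div_eq_one_iff_eq hpos.ne']
  convert congrArg (Nat.cast : ℕ → ℝ) ((add_comm _ _).trans hsplit) using 1
  push_cast
  congr!

end CondProb

lemma one_sub_pow_sub_le {x : ℝ} {m e : ℕ} (hx : x ≤ 1 / 2) (hem : e ≤ m) :
    (1 - x) ^ (m - e) ≤ 2 ^ e * Real.exp (-(x * m)) := by
  have hpos : 0 < 1 - x := by linarith
  calc (1 - x) ^ (m - e) = (1 - x) ^ m / (1 - x) ^ e := by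
        rw [pow_sub₀ _ hpos.ne' hem, div_eq_mul_inv]
    _ ≤ Real.exp (-x) ^ m / (1 / 2) ^ e := by
        gcongr
        · linarith [Real.add_one_le_exp (-x)]
        · linarith
    _ = 2 ^ e * Real.exp (-(x * m)) := by
        rw [← Real.exp_nat_mul, one_div, inv_pow, div_inv_eq_mul, mul_comm]
        ring_nf

lemma pow_mul_exp_neg_le {ε t : ℝ} (hε : 0 < ε) (ht : 0 ≤ t) (D : ℕ) :
    t ^ D * Real.exp (-(ε * t)) ≤ D.factorial / ε ^ D := by
  have h := Real.pow_div_factorial_le_exp _ (mul_nonneg hε.le ht) D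
  rw [div_le_iff₀ (by positivity), mul_pow] at h
  rw [le_div_iff₀ (by positivity), Real.exp_neg]
  calc t ^ D * (Real.exp (ε * t))⁻¹ * ε ^ D = ε ^ D * t ^ D * (Real.exp (ε * t))⁻¹ := by ring
    _ ≤ Real.exp (ε * t) * D.factorial * (Real.exp (ε * t))⁻¹ := by gcongr
    _ = D.factorial := by field_simp

lemma tendsto_mul_pow_mul_exp_neg {c κ : ℝ} (hc : 0 < c) (hcκ : 1 < c * κ) {t : ℕ → ℝ}
    (ht : ∀ᶠ n : ℕ in atTop, κ * Real.log n ≤ t n) (D : ℕ) :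
    Tendsto (fun n : ℕ => n * t n ^ D * Real.exp (-c * t n)) atTop (𝓝 0) := by
  have hκ : 0 < κ := pos_of_mul_pos_right (one_pos.trans hcκ) hc.le
  -- Split `c = ε + β` with `β κ > 1`: `e^{-εt}` absorbs `t^D`, and `e^{-βt} ≤ n^{-βκ}` beats `n`.
  set β := (c + 1 / κ) / 2
  set ε := c - β
  have hε : 0 < ε := by
    have : 1 / κ < c := by rwa [div_lt_iff₀ hκ]
    simp only [ε, β]
    linarith
  have hβκ : 1 < β * κ := by
    simp only [β]
    field_simp
    linarith
  have hlim : Tendsto (fun n : ℕ => (1 - β * κ) * Real.log n) atTop atBot :=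
    (Real.tendsto_log_atTop.comp tendsto_natCast_atTop_atTop).const_mul_atTop_of_neg (by linarith)
  have hbound := (Real.tendsto_exp_atBot.comp hlim).const_mul (D.factorial / ε ^ D)
  rw [mul_zero] at hbound
  have ht0 : ∀ᶠ n : ℕ in atTop, 0 ≤ t n := by
    filter_upwards [ht, eventually_ge_atTop 1] with n htn hn
    exact le_trans (mul_nonneg hκ.le (Real.log_nonneg (by exact_mod_cast hn))) htn
  refine squeeze_zero' (by filter_upwards [ht0] with n htn; positivity) ?_ hbound
  filter_upwards [ht, ht0, eventually_ge_atTop 1] with n htn ht0 hn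
  calc (n : ℝ) * t n ^ D * Real.exp (-c * t n)
      = (t n ^ D * Real.exp (-(ε * t n))) * (n * Real.exp (-(β * t n))) := by
        rw [show -c * t n = -(ε * t n) + -(β * t n) by simp only [ε]; ring, Real.exp_add]
        ring
    _ ≤ (D.factorial / ε ^ D) * (Real.exp (Real.log n) * Real.exp (-(β * (κ * Real.log n)))) := by
        rw [Real.exp_log (by exact_mod_cast hn)]
        gcongr
        exact pow_mul_exp_neg_le hε ht0 D
    _ = (D.factorial / ε ^ D) * Real.exp ((1 - β * κ) * Real.log n) := by
        rw [← Real.exp_add]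
        ring_nf

section Clauses

variable {n : ℕ}

noncomputable def plantedClauses (n : ℕ) : Finset (Clause n) :=
  univ ×ˢ ({s | ∃ i, s i = true} : Finset (Fin 3 → Bool))

lemma mem_plantedClauses {c : Clause n} : c ∈ plantedClauses n ↔ ∃ i, c.2 i = true := by
  simp [plantedClauses]

lemma card_plantedClauses : #(plantedClauses n) = 7 * (n * ((n - 1) * (n - 2))) := by
  rw [plantedClauses, card_product, card_univ, Fintype.card_embedding_eq]
  have : #{s : Fin 3 → Bool | ∃ i, s i = true} = 7 := by decide
  simp [this, Nat.descFactorial]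
  ring

lemma card_clauses_le_of_coeFn_mem (S : Finset (Clause n))
    (U : Finset ((Fin 3 → Fin n) × (Fin 3 → Bool))) (h : ∀ c ∈ S, (⇑c.1, c.2) ∈ U) :
    #S ≤ #U :=
  card_le_card_of_injOn (fun c => (⇑c.1, c.2)) h fun _ _ _ _ hc =>
    Prod.ext (DFunLike.coe_injective (congrArg Prod.fst hc :)) (congrArg Prod.snd hc :)

noncomputable def clausesThrough (v w : Fin n) : Finset (Clause n) :=
  {c | (∃ i, c.1 i = v) ∧ ∃ i, c.1 i = w}

lemma mem_clausesThrough {c : Clause n} {v w : Fin n} :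
    c ∈ clausesThrough v w ↔ (∃ i, c.1 i = v) ∧ ∃ i, c.1 i = w := by
  simp [clausesThrough]

lemma card_clausesThrough_le {v w : Fin n} (hvw : v ≠ w) : #(clausesThrough v w) ≤ 48 * n := by
  let pinned (p : Fin 3 × Fin 3) : Finset (Fin 3 → Fin n) :=
    {f | ∀ i ∈ ({p.1, p.2} : Finset (Fin 3)), f i = if i = p.1 then v else w}
  have hpinned : ∀ p ∈ (univ : Finset (Fin 3)).offDiag, #(pinned p) = n := by
    intro p hp
    rw [card_filter_forall_mem_eq _ (fun i => if i = p.1 then v else w),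
      card_pair (mem_offDiag.1 hp).2.2]
    simp
  calc #(clausesThrough v w)
      ≤ #(((univ : Finset (Fin 3)).offDiag.biUnion pinned) ×ˢ (univ : Finset (Fin 3 → Bool))) := by
        refine card_clauses_le_of_coeFn_mem _ _ fun c hc => ?_
        obtain ⟨⟨i, rfl⟩, i', rfl⟩ := mem_clausesThrough.1 hc
        have hii' : i ≠ i' := fun h => hvw (congrArg c.1 h)
        simp only [mem_product, mem_univ, and_true, mem_biUnion, mem_offDiag, true_and]
        exact ⟨(i, i'), hii', by simp [pinned, hii'.symm]⟩
    _ ≤ 6 * n * 8 := by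
        rw [card_product, card_univ, Fintype.card_fun]
        gcongr
        · exact (card_biUnion_le.trans_eq (sum_congr rfl hpinned)).trans (by simp)
        · simp
    _ = 48 * n := by ring

noncomputable def pnnClausesAt (z : Fin n) : Finset (Clause n) := {c | typePNN c ∧ posIn c z}

lemma isolatedDeg_eq_card {m : ℕ} (φ : Formula n m) (z : Fin n) :
    isolatedDeg φ z = #{t | φ t ∈ pnnClausesAt z} := by
  simp [isolatedDeg, pnnClausesAt]

lemma card_pnnClausesAt_le (z : Fin n) : #(pnnClausesAt z) ≤ 12 * n ^ 2 := by
  let pinned (i : Fin 3) : Finset ((Fin 3 → Fin n) × (Fin 3 → Bool)) :=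
    ({f | ∀ k ∈ ({i} : Finset (Fin 3)), f k = z} : Finset _) ×ˢ
      ({s | ∀ k ∈ ({i} : Finset (Fin 3)), s k = true} : Finset _)
  have hpinned : ∀ i, #(pinned i) = n ^ 2 * 4 := by
    intro i
    rw [card_product, card_filter_forall_mem_eq (g := fun _ => z),
      card_filter_forall_mem_eq (g := fun _ => true)]
    simp
  calc #(pnnClausesAt z) ≤ #(univ.biUnion pinned) := by
        refine card_clauses_le_of_coeFn_mem _ _ fun c hc => ?_
        obtain ⟨i, rfl, hi⟩ := (mem_filter.1 hc).2.2
        simp only [mem_biUnion, mem_univ, true_and]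
        exact ⟨i, by simp [pinned, hi]⟩
    _ ≤ 12 * n ^ 2 := card_biUnion_le.trans_eq (by simp [hpinned]; ring)

lemma card_embedding_filter_forall_ne (z : Fin n) :
    #{e : Fin 3 ↪ Fin n | ∀ i, e i ≠ z} = (n - 1).descFactorial 3 := by
  rw [← Fintype.card_subtype, Fintype.card_congr (embeddingSubtypeEquiv (· ≠ z)),
    Fintype.card_embedding_eq]
  simp [Fintype.card_subtype_compl]

lemma card_pnnClausesAt_ge (z : Fin n) : 3 * ((n - 1) * (n - 2)) ≤ #(pnnClausesAt z) := by
  have hhit : #{e : Fin 3 ↪ Fin n | ∃ i, e i = z} = 3 * ((n - 1) * (n - 2)) := by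
    have := card_filter_add_card_filter_not (s := univ) (fun e : Fin 3 ↪ Fin n => ∃ i, e i = z)
    simp only [not_exists, card_embedding_filter_forall_ne, card_univ, Fintype.card_embedding_eq,
      Fintype.card_fin, descFactorial_three_eq n] at this
    omega
  rw [← hhit]
  -- An embedding hitting `z` gives the `(+,-,-)` clause that is positive exactly at `z`.
  refine card_le_card_of_injOn (fun e => (e, fun i => decide (e i = z))) ?_
    fun _ _ _ _ h => congrArg Prod.fst h
  rintro e he
  obtain ⟨i, rfl⟩ := (mem_filter.1 he).2
  simp only [pnnClausesAt, coe_filter, mem_univ, true_and, Set.mem_ofPred_eq]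
  exact ⟨⟨i, by simp, fun k hk => by simpa using fun h => hk (e.injective h)⟩, i, rfl, by simp⟩

lemma disjoint_pnnClausesAt {x y : Fin n} (hxy : x ≠ y) :
    Disjoint (pnnClausesAt x) (pnnClausesAt y) := by
  refine disjoint_left.2 fun c hx hy => hxy ?_
  obtain ⟨⟨i, -, hsign⟩, ix, rfl, hix⟩ := (mem_filter.1 hx).2
  obtain ⟨-, iy, rfl, hiy⟩ := (mem_filter.1 hy).2
  have unique_pos : ∀ k, c.2 k = true → k = i := fun k hk => by_contra fun h => by
    simp [hsign k h] at hk
  rw [unique_pos ix hix, unique_pos iy hiy]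

lemma pnnClausesAt_subset_plantedClauses (z : Fin n) : pnnClausesAt z ⊆ plantedClauses n :=
  fun _ hc => mem_plantedClauses.2 <| by obtain ⟨i, _, hi⟩ := (mem_filter.1 hc).2.2; exact ⟨i, hi⟩

lemma card_sdiff_pnnClausesAt_le {x y : Fin n} (hxy : x ≠ y) :
    #(plantedClauses n \ (pnnClausesAt x ∪ pnnClausesAt y)) ≤
      (7 * n - 6) * ((n - 1) * (n - 2)) := by
  have hx := card_pnnClausesAt_ge x
  have hy := card_pnnClausesAt_ge y
  rw [card_sdiff_of_subset (union_subset (pnnClausesAt_subset_plantedClauses x)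
      (pnnClausesAt_subset_plantedClauses y)), card_union_of_disjoint (disjoint_pnnClausesAt hxy),
    card_plantedClauses]
  generalize (n - 1) * (n - 2) = r at *
  rw [Nat.sub_mul, mul_assoc]
  omega

end Clauses

section ClausePaths

variable {n m : ℕ}

lemma adj_or_eq_of_mem_clause (φ : Formula n m) (t : Fin m) (i i' : Fin 3) :
    (primalGraph φ).Adj ((φ t).1 i) ((φ t).1 i') ∨ (φ t).1 i = (φ t).1 i' := by
  by_cases h : (φ t).1 i = (φ t).1 i'
  · exact .inr h
  · exact .inl ((SimpleGraph.fromRel_adj _ _ _).2 ⟨h, .inl ⟨t, i, i', rfl, rfl⟩⟩)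

lemma edist_le_one_of_mem_clausesThrough {φ : Formula n m} {t : Fin m} {a b : Fin n}
    (h : φ t ∈ clausesThrough a b) : (primalGraph φ).edist a b ≤ 1 := by
  obtain ⟨⟨i, rfl⟩, i', rfl⟩ := mem_clausesThrough.1 h
  exact SimpleGraph.edist_le_one_iff_adj_or_eq.2 (adj_or_eq_of_mem_clause φ t i i')

lemma exists_mem_clausesThrough_of_adj {φ : Formula n m} {a b : Fin n}
    (h : (primalGraph φ).Adj a b) : ∃ t, φ t ∈ clausesThrough a b := by
  obtain ⟨-, ⟨t, i, i', rfl, rfl⟩ | ⟨t, i, i', rfl, rfl⟩⟩ := (SimpleGraph.fromRel_adj _ _ _).1 h <;>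
    exact ⟨t, mem_clausesThrough.2 ⟨⟨_, rfl⟩, _, rfl⟩⟩

def IsClausePath (φ : Formula n m) {ℓ : ℕ} (v : Fin (ℓ + 1) → Fin n) (j : Fin ℓ ↪ Fin m) :
    Prop :=
  ∀ i, v i.castSucc ≠ v i.succ ∧ φ (j i) ∈ clausesThrough (v i.castSucc) (v i.succ)

lemma exists_isClausePath {φ : Formula n m} {x y : Fin n} (h : (primalGraph φ).Reachable x y) :
    ∃ (v : Fin ((primalGraph φ).dist x y + 1) → Fin n)
      (j : Fin ((primalGraph φ).dist x y) ↪ Fin m),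
      v 0 = x ∧ v (Fin.last _) = y ∧ IsClausePath φ v j := by
  obtain ⟨w, hw⟩ := h.exists_walk_length_eq_dist
  have hgeo : (w.length : ℕ∞) = (primalGraph φ).edist x y := by
    rw [hw, h.coe_dist_eq_edist]
  rw [← hw]
  have hadj (i : Fin w.length) : (primalGraph φ).Adj (w.getVert i) (w.getVert (i + 1)) :=
    w.adj_getVert_succ i.2
  choose t ht using fun i => exists_mem_clausesThrough_of_adj (hadj i)
  -- A clause shared by the edges `i < k` of the shortest walk would join its vertices `i` and
  -- `k + 1`, which are at distance `k + 1 - i ≥ 2`.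
  have ht_inj : Function.Injective t := by
    intro i k hik
    by_contra hne
    wlog hlt : i < k generalizing i k
    · exact this hik.symm (Ne.symm hne) (lt_of_le_of_ne (not_lt.1 hlt) (Ne.symm hne))
    have hshort : (primalGraph φ).edist (w.getVert i) (w.getVert (k + 1)) ≤ 1 :=
      edist_le_one_of_mem_clausesThrough (t := t k) (mem_clausesThrough.2
        ⟨hik ▸ (mem_clausesThrough.1 (ht i)).1, (mem_clausesThrough.1 (ht k)).2⟩)
    have hlong := w.sub_le_edist_getVert hgeo (i := i) (k := k + 1) k.2
    have : ((2 : ℕ) : ℕ∞) ≤ 1 := le_trans (by gcongr; omega) (hlong.trans hshort)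
    norm_num at this
  exact ⟨fun i => w.getVert i, ⟨t, ht_inj⟩, w.getVert_zero, w.getVert_length,
    fun i => ⟨(hadj i).ne, ht i⟩⟩

end ClausePaths

section IsolatedPairs

variable {n m : ℕ}

def HasCloseIsolatedPair (φ : Formula n m) (k d : ℕ) : Prop :=
  ∃ x y : Fin n, x ≠ y ∧ kIsolated φ k x ∧ kIsolated φ k y ∧
    (primalGraph φ).Reachable x y ∧ (primalGraph φ).dist x y ≤ d

def HasPathWithIsolatedEnds (φ : Formula n m) (ℓ k : ℕ) : Prop :=
  ∃ (v : Fin (ℓ + 1) → Fin n) (j : Fin ℓ ↪ Fin m), v 0 ≠ v (Fin.last ℓ) ∧ IsClausePath φ v j ∧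
    #{t | t ∉ Set.range j ∧ φ t ∈ pnnClausesAt (v 0) ∪ pnnClausesAt (v (Fin.last ℓ))} ≤ k

lemma hasPathWithIsolatedEnds_of_kIsolated {φ : Formula n m} {k : ℕ} {x y : Fin n}
    (hxy : x ≠ y) (hx : kIsolated φ k x) (hy : kIsolated φ k y)
    (h : (primalGraph φ).Reachable x y) :
    HasPathWithIsolatedEnds φ ((primalGraph φ).dist x y) (2 * k) := by
  obtain ⟨v, j, hv0, hvl, hpath⟩ := exists_isClausePath h
  refine ⟨v, j, by rwa [hv0, hvl], hpath, ?_⟩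
  rw [hv0, hvl, two_mul]
  calc #{t | t ∉ Set.range j ∧ φ t ∈ pnnClausesAt x ∪ pnnClausesAt y}
      ≤ #(({t | φ t ∈ pnnClausesAt x} : Finset (Fin m)) ∪
          ({t | φ t ∈ pnnClausesAt y} : Finset _)) :=
        card_le_card fun t ht => by simpa [mem_union] using (mem_filter.1 ht).2.2
    _ ≤ k + k := (card_union_le _ _).trans <|
        add_le_add (isolatedDeg_eq_card φ x ▸ hx) (isolatedDeg_eq_card φ y ▸ hy)

lemma card_clausePath_few_hits_le {ℓ : ℕ} {v : Fin (ℓ + 1) → Fin n}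
    (hend : v 0 ≠ v (Fin.last ℓ)) (hstep : ∀ i : Fin ℓ, v i.castSucc ≠ v i.succ)
    (j : Fin ℓ ↪ Fin m) (k : ℕ) :
    #{φ : Formula n m | (∀ i, φ (j i) ∈ clausesThrough (v i.castSucc) (v i.succ)) ∧
        (∀ t, φ t ∈ plantedClauses n) ∧
        #{t | t ∉ Set.range j ∧ φ t ∈ pnnClausesAt (v 0) ∪ pnnClausesAt (v (Fin.last ℓ))} ≤ k} ≤
      ∑ a ∈ range (k + 1), m ^ a * ((48 * n) ^ ℓ *
        ((24 * n ^ 2) ^ a * ((7 * n - 6) * ((n - 1) * (n - 2))) ^ (m - ℓ - a))) := by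
  have hC : ∏ i : Fin ℓ, #(clausesThrough (v i.castSucc) (v i.succ)) ≤ (48 * n) ^ ℓ :=
    (prod_le_pow_card _ _ _ fun i _ => card_clausesThrough_le (hstep i)).trans_eq (by simp)
  have hB : #(pnnClausesAt (v 0) ∪ pnnClausesAt (v (Fin.last ℓ))) ≤ 24 * n ^ 2 :=
    (card_union_le _ _).trans <| by
      linarith [card_pnnClausesAt_le (v 0), card_pnnClausesAt_le (v (Fin.last ℓ))]
  have hPB := card_sdiff_pnnClausesAt_le hend
  refine (card_filter_few_hits_le j _ _ (plantedClauses n) k).trans ?_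
  simp only [Fintype.card_fin]
  gcongr

lemma card_planted_hasPathWithIsolatedEnds_le (ℓ k : ℕ) :
    #{φ : Formula n m | Planted φ ∧ HasPathWithIsolatedEnds φ ℓ k} ≤
      n ^ (ℓ + 1) * (m ^ ℓ * ∑ a ∈ range (k + 1), m ^ a * ((48 * n) ^ ℓ *
        ((24 * n ^ 2) ^ a * ((7 * n - 6) * ((n - 1) * (n - 2))) ^ (m - ℓ - a)))) := by
  let good : Finset (Fin (ℓ + 1) → Fin n) :=
    {v | v 0 ≠ v (Fin.last ℓ) ∧ ∀ i : Fin ℓ, v i.castSucc ≠ v i.succ}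
  have hcover : ({φ : Formula n m | Planted φ ∧ HasPathWithIsolatedEnds φ ℓ k} : Finset _) ⊆
      good.biUnion fun v => univ.biUnion fun j : Fin ℓ ↪ Fin m =>
        {φ | (∀ i, φ (j i) ∈ clausesThrough (v i.castSucc) (v i.succ)) ∧
          (∀ t, φ t ∈ plantedClauses n) ∧
          #{t | t ∉ Set.range j ∧ φ t ∈ pnnClausesAt (v 0) ∪ pnnClausesAt (v (Fin.last ℓ))} ≤
            k} := by
    intro φ hφ
    obtain ⟨hP, v, j, hv, hpath, hk⟩ := (mem_filter.1 hφ).2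
    simp only [mem_biUnion, mem_univ, true_and, mem_filter]
    exact ⟨v, mem_filter.2 ⟨mem_univ v, hv, fun i => (hpath i).1⟩, j, fun i => (hpath i).2,
      fun t => mem_plantedClauses.2 (hP t), hk⟩
  set S := ∑ a ∈ range (k + 1), m ^ a * ((48 * n) ^ ℓ *
    ((24 * n ^ 2) ^ a * ((7 * n - 6) * ((n - 1) * (n - 2))) ^ (m - ℓ - a)))
  refine (card_le_card hcover).trans <| card_biUnion_le.trans <|
    (sum_le_card_nsmul good _ (m ^ ℓ * S) fun v hv => ?_).trans ?_
  · obtain ⟨hend, hstep⟩ := (mem_filter.1 hv).2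
    refine card_biUnion_le.trans <| (sum_le_card_nsmul univ _ S fun j _ =>
      card_clausePath_few_hits_le hend hstep j k).trans ?_
    rw [card_univ, Fintype.card_embedding_eq, smul_eq_mul]
    simp only [Fintype.card_fin]
    gcongr
    exact Nat.descFactorial_le_pow _ _
  rw [smul_eq_mul]
  gcongr
  exact (card_le_univ _).trans_eq (by simp)

end IsolatedPairs

lemma mul_sq_div_le {N R M : ℝ} (hN : 0 < N) (hM : 0 ≤ M) (hR : N ^ 2 ≤ 4 * R) :
    48 * N ^ 2 * M / (7 * (N * R)) ≤ 28 * (M / N) := by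
  have hRpos : 0 < R := by nlinarith
  rw [mul_div_assoc', div_le_div_iff₀ (by positivity) hN]
  nlinarith [mul_le_mul_of_nonneg_left hR (mul_nonneg hM hN.le),
    mul_nonneg (mul_nonneg hM hN.le) hRpos.le]

lemma pathTerm_div_le {N R : ℝ} {m ℓ a D : ℕ} (hN : 2 ≤ N) (hR : N ^ 2 ≤ 4 * R) (hNm : N ≤ m)
    (hD : ℓ + a ≤ D) (hDm : D ≤ m) :
    N ^ (ℓ + 1) * (m ^ ℓ * (m ^ a * ((48 * N) ^ ℓ * ((24 * N ^ 2) ^ a *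
      ((7 * N - 6) * R) ^ (m - ℓ - a))))) / (7 * (N * R)) ^ m ≤
      N * (56 * (m / N)) ^ D * Real.exp (-(6 / 7) * (m / N)) := by
  have hNpos : 0 < N := by linarith
  have hRpos : 0 < R := by nlinarith
  have hx := mul_sq_div_le hNpos (Nat.cast_nonneg m) hR
  set K := 7 * (N * R)
  set t := (m : ℝ) / N
  have ht : 1 ≤ t := (one_le_div hNpos).2 hNm
  have hK : K ≠ 0 := by positivity
  have hsplit : K ^ m = K ^ ℓ * K ^ a * K ^ (m - ℓ - a) := by
    rw [← pow_add, ← pow_add]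
    congr 1
    omega
  have hq : (7 * N - 6) * R / K = 1 - 6 / (7 * N) := by
    simp only [K]
    field_simp
  have hq_le : 6 / (7 * N) ≤ 1 / 2 := by
    rw [div_le_iff₀ (by positivity)]
    linarith
  calc _ = N * (48 * N ^ 2 * m / K) ^ ℓ * (24 * N ^ 2 * m / K) ^ a *
        ((7 * N - 6) * R / K) ^ (m - ℓ - a) := by
        rw [hsplit, div_pow, div_pow, div_pow]
        field_simp
        ring
    _ ≤ N * (28 * t) ^ ℓ * (28 * t) ^ a * (2 ^ (ℓ + a) * Real.exp (-(6 / 7) * t)) := by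
        have hy : 24 * N ^ 2 * m / K ≤ 28 * t := by
          refine (div_le_div_of_nonneg_right ?_ (by positivity)).trans hx
          have : (0 : ℝ) ≤ N ^ 2 * m := by positivity
          linarith
        have hq_nonneg : 0 ≤ 1 - 6 / (7 * N) := by linarith
        have hpow : (1 - 6 / (7 * N)) ^ (m - (ℓ + a)) ≤
            2 ^ (ℓ + a) * Real.exp (-(6 / 7) * t) :=
          (one_sub_pow_sub_le hq_le (by omega)).trans_eq (by simp only [t]; ring_nf)
        rw [hq, Nat.sub_sub]
        gcongr
    _ = N * (56 * t) ^ (ℓ + a) * Real.exp (-(6 / 7) * t) := by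
        rw [show 56 * t = 2 * (28 * t) by ring, mul_pow 2 (28 * t), pow_add (28 * t)]
        ring
    _ ≤ N * (56 * t) ^ D * Real.exp (-(6 / 7) * t) := by
        gcongr
        linarith

section PlantedProbability

variable {n m : ℕ}

lemma card_filter_planted : #{φ : Formula n m | Planted φ} = #(plantedClauses n) ^ m := by
  have : ({φ : Formula n m | Planted φ} : Finset _) =
      Fintype.piFinset fun _ => plantedClauses n := by
    ext φ
    rw [mem_filter]
    simp only [mem_univ, true_and, Fintype.mem_piFinset, mem_plantedClauses, Planted]
  rw [this, Fintype.card_piFinset, prod_const, card_univ, Fintype.card_fin]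

lemma prPlanted_eq_card_div (E : Formula n m → Prop) :
    prPlanted n m E =
      #{φ | Planted φ ∧ E φ} / ((7 * (n * ((n - 1) * (n - 2))) : ℕ) : ℝ) ^ m := by
  rw [prPlanted, condProb, card_filter_planted, card_plantedClauses, Nat.cast_pow]

lemma exists_planted (hn : 3 ≤ n) : ∃ φ : Formula n m, Planted φ :=
  ⟨fun _ => (Fin.castLEEmb hn, fun _ => true), fun _ => ⟨0, rfl⟩⟩

lemma prPlanted_hasPathWithIsolatedEnds_le {ℓ k D : ℕ} (hn : 4 ≤ n) (hnm : n ≤ m)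
    (hD : ℓ + k ≤ D) (hDm : D ≤ m) :
    prPlanted n m (fun φ => HasPathWithIsolatedEnds φ ℓ k) ≤
      (k + 1) * (n * (56 * (m / n : ℝ)) ^ D * Real.exp (-(6 / 7) * (m / n))) := by
  have hR : (n : ℝ) ^ 2 ≤ 4 * (((n - 1) * (n - 2) : ℕ) : ℝ) := by
    exact_mod_cast sq_le_four_mul_pred_mul hn
  set R : ℝ := (((n - 1) * (n - 2) : ℕ) : ℝ)
  rw [prPlanted_eq_card_div]
  calc _ ≤ ((n ^ (ℓ + 1) * (m ^ ℓ * ∑ a ∈ range (k + 1), m ^ a * ((48 * n) ^ ℓ *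
        ((24 * n ^ 2) ^ a * ((7 * n - 6) * ((n - 1) * (n - 2))) ^ (m - ℓ - a)))) : ℕ) : ℝ) /
          ((7 * (n * ((n - 1) * (n - 2))) : ℕ) : ℝ) ^ m := by
        gcongr
        exact_mod_cast card_planted_hasPathWithIsolatedEnds_le ℓ k
    _ = ∑ a ∈ range (k + 1), (n : ℝ) ^ (ℓ + 1) * (m ^ ℓ * (m ^ a * ((48 * n) ^ ℓ *
        ((24 * n ^ 2) ^ a * ((7 * n - 6) * R) ^ (m - ℓ - a))))) / (7 * (n * R)) ^ m := by
        push_cast [Nat.cast_sub (show 6 ≤ 7 * n by omega), R]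
        rw [mul_sum, mul_sum, sum_div]
    _ ≤ ∑ a ∈ range (k + 1), (n * (56 * (m / n : ℝ)) ^ D * Real.exp (-(6 / 7) * (m / n))) :=
        sum_le_sum fun a ha => pathTerm_div_le (by exact_mod_cast (by omega : 2 ≤ n)) hR
          (by exact_mod_cast hnm) (by have := mem_range.1 ha; omega) hDm
    _ = _ := by simp

lemma prPlanted_hasCloseIsolatedPair_le {k d : ℕ} (hn : 4 ≤ n) (hnm : n ≤ m)
    (hDm : d + 2 * k ≤ m) :
    prPlanted n m (fun φ => HasCloseIsolatedPair φ k d) ≤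
      (d + 1) * ((2 * k + 1) *
        (n * (56 * (m / n : ℝ)) ^ (d + 2 * k) * Real.exp (-(6 / 7) * (m / n)))) := by
  calc _ ≤ prPlanted n m (fun φ => ∃ ℓ ∈ range (d + 1), HasPathWithIsolatedEnds φ ℓ (2 * k)) :=
        condProb_mono fun φ _ ⟨x, y, hxy, hx, hy, hr, hd⟩ => ⟨_, mem_range.2 (Nat.lt_succ_of_le hd),
          hasPathWithIsolatedEnds_of_kIsolated hxy hx hy hr⟩
    _ ≤ ∑ ℓ ∈ range (d + 1), prPlanted n m (fun φ => HasPathWithIsolatedEnds φ ℓ (2 * k)) :=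
        condProb_exists_le_sum _ _
    _ ≤ ∑ ℓ ∈ range (d + 1), ((2 * k + 1) *
          (n * (56 * (m / n : ℝ)) ^ (d + 2 * k) * Real.exp (-(6 / 7) * (m / n)))) :=
        sum_le_sum fun ℓ hℓ => by
          have := mem_range.1 hℓ
          exact_mod_cast prPlanted_hasPathWithIsolatedEnds_le hn hnm (by omega) hDm
    _ = _ := by simp

lemma eventually_le_of_mul_log_le {κ : ℝ} (hκ : 0 < κ) {m : ℕ → ℕ}
    (hρ : ∀ᶠ n : ℕ in atTop, κ * Real.log n * n ≤ m n) : ∀ᶠ n : ℕ in atTop, n ≤ m n := by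
  have hlog : ∀ᶠ n : ℕ in atTop, 1 / κ ≤ Real.log n :=
    (Real.tendsto_log_atTop.comp tendsto_natCast_atTop_atTop).eventually_ge_atTop _
  filter_upwards [hρ, hlog] with n hn hn1
  have hκlog : 1 ≤ κ * Real.log n := by rwa [div_le_iff₀' hκ] at hn1
  exact_mod_cast (le_mul_of_one_le_left (Nat.cast_nonneg n) hκlog).trans hn

lemma tendsto_prPlanted_hasCloseIsolatedPair {κ : ℝ} (hκ : 7 / 6 < κ) {m : ℕ → ℕ}
    (hρ : ∀ᶠ n : ℕ in atTop, κ * Real.log n * n ≤ m n) (k d : ℕ) :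
    Tendsto (fun n => prPlanted n (m n) fun φ => HasCloseIsolatedPair φ k d) atTop (𝓝 0) := by
  have ht : ∀ᶠ n : ℕ in atTop, κ * Real.log n ≤ m n / n := by
    filter_upwards [hρ, eventually_ge_atTop 1] with n hn hn1
    rwa [le_div_iff₀ (by exact_mod_cast hn1)]
  have hlim := (tendsto_mul_pow_mul_exp_neg (c := 6 / 7) (by norm_num) (by linarith) ht
    (d + 2 * k)).const_mul ((d + 1) * (2 * k + 1) * 56 ^ (d + 2 * k) : ℝ)
  rw [mul_zero] at hlim
  refine squeeze_zero' (.of_forall fun n => condProb_nonneg) ?_ hlim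
  filter_upwards [eventually_le_of_mul_log_le (by linarith) hρ,
    eventually_ge_atTop (max 4 (d + 2 * k))] with n hnm hn
  refine (prPlanted_hasCloseIsolatedPair_le (by omega) hnm (by omega)).trans_eq ?_
  rw [mul_pow]
  ring

end PlantedProbability

theorem isolated_vars_far_whp_general (κ : ℝ) (hκ : 7 / 6 < κ) (m : ℕ → ℕ)
    (hρ : ∀ᶠ n : ℕ in atTop, κ * Real.log n * n ≤ (m n : ℝ))
    (d1 d2 : ℕ) :
    Tendsto (fun n : ℕ => prPlanted n (m n) fun φ =>
        ¬ ∃ x y : Fin n, x ≠ y ∧ kIsolated φ d1 x ∧ kIsolated φ d1 y ∧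
          (primalGraph φ).Reachable x y ∧ (primalGraph φ).dist x y ≤ d2)
      atTop (𝓝 1) := by
  have hbad := (tendsto_prPlanted_hasCloseIsolatedPair hκ hρ d1 d2).const_sub 1
  rw [sub_zero] at hbad
  refine hbad.congr' ?_
  filter_upwards [eventually_ge_atTop 3] with n hn
  exact (condProb_not (exists_planted hn)).symm

/-- **Lemma (isolated variables are far apart).**  If `κ > 7/6` and `ρ = ρ(n) ≥ κ · ln n`,
then for any fixed integers `d₁, d₂ ≥ 1`, whp a random `φ ∈ Φ^plant(n, ρn)` contains no
two distinct `d₁`-isolated variables at distance at most `d₂` in the primal graph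
`G(φ)`. -/
theorem isolated_vars_far_whp (κ : ℝ) (hκ : 7 / 6 < κ) (m : ℕ → ℕ)
    (hρ : ∀ᶠ n : ℕ in atTop, κ * Real.log n * n ≤ (m n : ℝ))
    (d1 d2 : ℕ) (hd1 : 1 ≤ d1) (hd2 : 1 ≤ d2) :
    Tendsto (fun n : ℕ => prPlanted n (m n) fun φ =>
        ¬ ∃ x y : Fin n, x ≠ y ∧ kIsolated φ d1 x ∧ kIsolated φ d1 y ∧
          (primalGraph φ).Reachable x y ∧ (primalGraph φ).dist x y ≤ d2)
      atTop (𝓝 1) :=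
  isolated_vars_far_whp_general κ hκ m hρ d1 d2
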